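/- arXiv:1112.2528 — 3 statements merged into one kernel-verified Lean document; each statement's English description precedes it below -/
import Mathlib

section
/- Let N ≥ 1 be an integer, ε := 1/N, and let φ''_F, φ''_{2F} ∈ ℝ. Then there exists a nonzero u ∈ U such that ⟨L^a u, u⟩ = φ''_F ‖Du‖²_{ℓ²_ε}; in fact any u ∈ U with (Du)_ℓ = (−1)^ℓ for all ℓ has this property. Consequently, when φ''_{2F} > 0 the coercivity constant c₀ = min(φ''_F, φ''_F + 4φ''_{2F}) = φ''_F cannot be improved. -/
open Finset

noncomputable section

/-- mesh size ε = 1/N -/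
def eps (N : ℕ) : ℝ := 1 / N

/-- the periodic cell {-N+1, …, N} -/
def cell (N : ℕ) : Finset ℤ := Finset.Icc (-(N : ℤ) + 1) N

/-- 2N-periodicity -/
def Per (N : ℕ) (u : ℤ → ℝ) : Prop := ∀ ℓ : ℤ, u (ℓ + 2 * N) = u ℓ

/-- zero mean over a period -/
def MeanZero (N : ℕ) (u : ℤ → ℝ) : Prop := ∑ ℓ ∈ cell N, u ℓ = 0

/-- first discrete derivative (Du)_ℓ = (u_ℓ - u_{ℓ-1})/ε -/
def D (N : ℕ) (u : ℤ → ℝ) (ℓ : ℤ) : ℝ := (u ℓ - u (ℓ - 1)) / eps N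

/-- second discrete derivative (D²u)_ℓ = ((Du)_{ℓ+1} - (Du)_ℓ)/ε -/
def D2 (N : ℕ) (u : ℤ → ℝ) (ℓ : ℤ) : ℝ := (D N u (ℓ + 1) - D N u ℓ) / eps N

/-- third discrete derivative (D³u)_ℓ = ((D²u)_ℓ - (D²u)_{ℓ-1})/ε -/
def D3 (N : ℕ) (u : ℤ → ℝ) (ℓ : ℤ) : ℝ := (D2 N u ℓ - D2 N u (ℓ - 1)) / eps N

/-- the ℓ²_ε inner product ⟨u,w⟩ = ε Σ u_ℓ w_ℓ -/
def ip (N : ℕ) (u w : ℤ → ℝ) : ℝ := ∑ ℓ ∈ cell N, eps N * (u ℓ * w ℓ)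

/-- the squared ℓ²_ε norm ‖u‖² = ε Σ |u_ℓ|² -/
def nsq (N : ℕ) (u : ℤ → ℝ) : ℝ := ∑ ℓ ∈ cell N, eps N * |u ℓ| ^ 2

/-- linearized atomistic operator -/
def La (N : ℕ) (cF c2F : ℝ) (v : ℤ → ℝ) (ℓ : ℤ) : ℝ :=
  cF * (-v (ℓ + 1) + 2 * v ℓ - v (ℓ - 1)) / eps N ^ 2
    + c2F * (-v (ℓ + 2) + 2 * v ℓ - v (ℓ - 2)) / eps N ^ 2

/-!
If `(Du)_ℓ = (-1)^ℓ`, then `u_{ℓ+2} - u_ℓ = ε((-1)^{ℓ+2} + (-1)^{ℓ+1}) = 0`, so the next-nearest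
neighbour part of `L^a u` vanishes and `(L^a u)_ℓ = 2 φ''_F (-1)^ℓ / ε`. Hence
`⟨L^a u, u⟩ = 2 φ''_F Σ_ℓ (-1)^ℓ u_ℓ`. Consecutive terms of `g_ℓ := (-1)^ℓ u_ℓ` add up to `ε`,
and `g` is `2N`-periodic, so summing `g_ℓ + g_{ℓ-1} = ε` over a period gives `Σ_ℓ g_ℓ = N ε = 1`,
while `‖Du‖² = 2N ε = 2`. A witness is `u_ℓ = (ε/2)(-1)^ℓ`.
-/

lemma neg_one_zpow_add_one (ℓ : ℤ) : (-1 : ℝ) ^ (ℓ + 1) = -(-1) ^ ℓ := by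
  rw [zpow_add_one₀ (by norm_num), mul_neg_one]

lemma neg_one_zpow_sub_one (ℓ : ℤ) : (-1 : ℝ) ^ (ℓ - 1) = -(-1) ^ ℓ := by
  rw [← neg_neg ((-1 : ℝ) ^ (ℓ - 1)), ← neg_one_zpow_add_one, sub_add_cancel]

lemma neg_one_zpow_mul_self (ℓ : ℤ) : (-1 : ℝ) ^ ℓ * (-1) ^ ℓ = 1 := by
  rw [← zpow_add₀ (by norm_num), Even.neg_one_zpow ⟨ℓ, rfl⟩]

variable {N : ℕ}

lemma eps_ne_zero (hN : N ≠ 0) : eps N ≠ 0 := by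
  simp [eps, hN]

lemma card_cell (N : ℕ) : #(cell N) = 2 * N := by
  rw [cell, Int.card_Icc]; omega

lemma eps_mul_card_cell (hN : N ≠ 0) : eps N * #(cell N) = 2 := by
  rw [card_cell, eps]; push_cast; field_simp

lemma per_neg_one_zpow (N : ℕ) : Per N fun ℓ => (-1 : ℝ) ^ ℓ := by
  intro ℓ
  dsimp only
  rw [zpow_add₀ (by norm_num), Even.neg_one_zpow ⟨N, two_mul _⟩, mul_one]

lemma Per.mul {u v : ℤ → ℝ} (hu : Per N u) (hv : Per N v) : Per N fun ℓ => u ℓ * v ℓ :=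
  fun ℓ => by dsimp only; rw [hu, hv]

lemma sum_cell_comp_sub_one {g : ℤ → ℝ} (hg : Per N g) :
    ∑ ℓ ∈ cell N, g (ℓ - 1) = ∑ ℓ ∈ cell N, g ℓ := by
  -- each side is the sum over `Icc (-N) N` minus one end term, and `g (-N) = g N`
  have hle : -(N : ℤ) ≤ N := by omega
  have hshift : ∑ ℓ ∈ cell N, g (ℓ - 1) = ∑ ℓ ∈ Icc (-(N : ℤ)) (N - 1), g ℓ := by
    apply sum_nbij' (· - 1) (· + 1) <;> intros <;> simp_all [cell]
  have hleft := sum_insert (s := cell N) (f := g) (a := -(N : ℤ)) (by simp [cell])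
  have hright := sum_insert (s := Icc (-(N : ℤ)) (N - 1)) (f := g) (a := N) (by simp)
  rw [cell, insert_Icc_add_one_left_eq_Icc hle] at hleft
  rw [insert_Icc_sub_one_right_eq_Icc hle] at hright
  have hend := hg (-N)
  rw [neg_add_eq_sub, two_mul, add_sub_cancel_right] at hend
  rw [hshift, cell]
  linarith

lemma sum_cell_neg_one_zpow (N : ℕ) : ∑ ℓ ∈ cell N, (-1 : ℝ) ^ ℓ = 0 := by
  have h := sum_cell_comp_sub_one (per_neg_one_zpow N)
  simp only [neg_one_zpow_sub_one, sum_neg_distrib] at h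
  linarith

section AlternatingDerivative

variable {u : ℤ → ℝ} (hN : N ≠ 0) (hD : ∀ ℓ : ℤ, D N u ℓ = (-1 : ℝ) ^ ℓ)
include hN hD

lemma sub_pred_of_D_eq_neg_one_zpow (ℓ : ℤ) : u ℓ - u (ℓ - 1) = eps N * (-1) ^ ℓ := by
  rw [← hD ℓ, D, mul_div_cancel₀ _ (eps_ne_zero hN)]

lemma La_of_D_eq_neg_one_zpow (cF c2F : ℝ) (ℓ : ℤ) :
    La N cF c2F u ℓ = 2 * cF * (-1) ^ ℓ / eps N := by
  have h := sub_pred_of_D_eq_neg_one_zpow hN hD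
  have h₀ := h ℓ
  have h₁ : u (ℓ + 1) - u ℓ = -(eps N * (-1) ^ ℓ) := by
    simpa only [add_sub_cancel_right, neg_one_zpow_add_one, mul_neg] using h (ℓ + 1)
  have h₂ : u (ℓ + 2) - u (ℓ + 1) = eps N * (-1) ^ ℓ := by
    have := h (ℓ + 1 + 1)
    rwa [add_sub_cancel_right, neg_one_zpow_add_one, neg_one_zpow_add_one, neg_neg,
      add_assoc, one_add_one_eq_two] at this
  have h₃ : u (ℓ - 1) - u (ℓ - 2) = -(eps N * (-1) ^ ℓ) := by
    have := h (ℓ - 1)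
    rwa [sub_sub, one_add_one_eq_two, neg_one_zpow_sub_one, mul_neg] at this
  have hnext : -u (ℓ + 2) + 2 * u ℓ - u (ℓ - 2) = 0 := by
    linear_combination h₀ - h₁ - h₂ + h₃
  have hnear : -u (ℓ + 1) + 2 * u ℓ - u (ℓ - 1) = 2 * eps N * (-1) ^ ℓ := by
    linear_combination h₀ - h₁
  rw [La, hnext, hnear]
  field_simp [eps_ne_zero hN]
  ring

lemma sum_neg_one_zpow_mul_of_D_eq_neg_one_zpow (hu : Per N u) :
    ∑ ℓ ∈ cell N, (-1 : ℝ) ^ ℓ * u ℓ = 1 := by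
  have hpair : ∀ ℓ, (-1 : ℝ) ^ ℓ * u ℓ + (-1) ^ (ℓ - 1) * u (ℓ - 1) = eps N := fun ℓ => by
    rw [neg_one_zpow_sub_one]
    linear_combination (-1 : ℝ) ^ ℓ * sub_pred_of_D_eq_neg_one_zpow hN hD ℓ
      + eps N * neg_one_zpow_mul_self ℓ
  have hsum := sum_congr rfl fun ℓ (_ : ℓ ∈ cell N) => hpair ℓ
  rw [sum_add_distrib, sum_cell_comp_sub_one ((per_neg_one_zpow N).mul hu), sum_const,
    nsmul_eq_mul] at hsum
  linarith [eps_mul_card_cell hN]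

lemma nsq_D_of_D_eq_neg_one_zpow : nsq N (D N u) = 2 := by
  simp only [nsq, hD, abs_neg_one_zpow, one_pow, mul_one, sum_const, nsmul_eq_mul]
  rw [mul_comm, eps_mul_card_cell hN]

theorem ip_La_of_D_eq_neg_one_zpow (hu : Per N u) (cF c2F : ℝ) :
    ip N (La N cF c2F u) u = cF * nsq N (D N u) := by
  have hterm : ∀ ℓ, eps N * (La N cF c2F u ℓ * u ℓ) = 2 * cF * ((-1) ^ ℓ * u ℓ) := fun ℓ => by
    rw [La_of_D_eq_neg_one_zpow hN hD]
    field_simp [eps_ne_zero hN]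
  rw [ip, sum_congr rfl fun ℓ _ => hterm ℓ, ← mul_sum,
    sum_neg_one_zpow_mul_of_D_eq_neg_one_zpow hN hD hu, nsq_D_of_D_eq_neg_one_zpow hN hD]
  ring

end AlternatingDerivative

def alternating (N : ℕ) (ℓ : ℤ) : ℝ := eps N / 2 * (-1) ^ ℓ

lemma per_alternating (N : ℕ) : Per N (alternating N) :=
  fun ℓ => congrArg (eps N / 2 * ·) (per_neg_one_zpow N ℓ)

lemma meanZero_alternating (N : ℕ) : MeanZero N (alternating N) := by
  simp only [MeanZero, alternating]
  rw [← mul_sum, sum_cell_neg_one_zpow, mul_zero]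

lemma D_alternating (hN : N ≠ 0) (ℓ : ℤ) : D N (alternating N) ℓ = (-1) ^ ℓ := by
  rw [D, alternating, alternating, neg_one_zpow_sub_one]
  field_simp [eps_ne_zero hN]
  ring

lemma alternating_ne_zero (hN : N ≠ 0) : alternating N ≠ 0 := fun h => by
  simpa [alternating, eps_ne_zero hN] using congrFun h 0

/-- sharpness of the coercivity constant: there exists a nonzero
`u ∈ U` with `⟨L^a u, u⟩ = φ''_F ‖Du‖²`, and indeed every `u ∈ U` whose discrete
derivative is `(Du)_ℓ = (−1)^ℓ` has this property. -/
theorem stmt_3 (N : ℕ) (hN : 1 ≤ N) (cF c2F : ℝ) :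
    (∃ u : ℤ → ℝ, Per N u ∧ MeanZero N u ∧ u ≠ 0 ∧
        ip N (La N cF c2F u) u = cF * nsq N (D N u)) ∧
      (∀ u : ℤ → ℝ, Per N u → MeanZero N u → (∀ ℓ : ℤ, D N u ℓ = (-1 : ℝ) ^ ℓ) →
        ip N (La N cF c2F u) u = cF * nsq N (D N u)) := by
  have hN₀ : N ≠ 0 := by omega
  exact ⟨⟨alternating N, per_alternating N, meanZero_alternating N, alternating_ne_zero hN₀,
      ip_La_of_D_eq_neg_one_zpow hN₀ (D_alternating hN₀) (per_alternating N) cF c2F⟩,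
    fun u hu _ hD => ip_La_of_D_eq_neg_one_zpow hN₀ hD hu cF c2F⟩
end
end

section
/- Let N ≥ 1 be an integer, ε := 1/N, and let β : ℤ → [0,1] be 2N-periodic. Let I := {ℓ ∈ {−N+1,…,N} : 0 < β_{ℓ+j} < 1 for some j ∈ {−2,−1,1,2}} and K := #I. If β attains both the value 0 and the value 1, then for each j = 1, 2, 3, max_{−N+1 ≤ ℓ ≤ N} |(D^{(j)}β)_ℓ| ≥ (Kε)^{−j}. -/
open Finset

noncomputable section

attribute [local instance] Classical.propDecidable

/-- the interface (blending) index set -/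
def interf (N : ℕ) (β : ℤ → ℝ) : Finset ℤ :=
  (cell N).filter fun ℓ =>
    ∃ j ∈ ({-2, -1, 1, 2} : Finset ℤ), 0 < β (ℓ + j) ∧ β (ℓ + j) < 1

/-!
Choose a zero `a` and a one `b > a` of `β` at minimal distance `d = b - a`; by periodicity
`d < 2N`, and by minimality `0 < β < 1` strictly between them. The `d` points `a, a+2, …, b`
are then distinct modulo `2N` and all lie in `I`, so `d ≤ K` (unless `d = 1` and `K = 0`, where
the bounds are trivial because `0⁻¹ = 0`). With `h = dε`, the discrete mean value theorem on
`[a, b]` gives `Dβ ≥ 1/h` at some point; as `β` is minimal at `a`, `Dβ_a ≤ 0`, and the mean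
value theorem gives `D²β ≥ 1/h²` at some `t ∈ [a, b)`; as `β` is maximal at `b`, `D²β_b ≤ 0`,
and it gives `D³β ≤ -1/h³` somewhere in `(t, b]`.
-/

open Function

theorem Function.Periodic.apply_toIocMod {α γ : Type*} [AddCommGroup α] [LinearOrder α]
    [IsOrderedAddMonoid α] [Archimedean α] {f : α → γ} {p : α} (hf : Periodic f p) (hp : 0 < p)
    (a b : α) : f (toIocMod hp a b) = f b := by
  rw [← self_sub_toIocDiv_zsmul]
  exact hf.sub_zsmul_eq _

theorem toIocMod_injOn_Ioc {α : Type*} [AddCommGroup α] [LinearOrder α] [IsOrderedAddMonoid α]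
    [Archimedean α] {p : α} (hp : 0 < p) (a c : α) :
    Set.InjOn (toIocMod hp a) (Set.Ioc c (c + p)) := fun m hm m' hm' h => by
  rw [← (toIocMod_eq_self hp).2 hm, ← (toIocMod_eq_self hp).2 hm', ← toIocMod_toIocMod hp c a m,
    h, toIocMod_toIocMod]

theorem exists_div_le_sub (f : ℤ → ℝ) (p : ℤ) {k : ℕ} (hk : 0 < k) :
    ∃ i < k, (f (p + k) - f p) / k ≤ f (p + i + 1) - f (p + i) := by
  have htel : ∑ i ∈ range k, (f (p + i + 1) - f (p + i)) = f (p + k) - f p := by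
    simpa [add_assoc] using Finset.sum_range_sub (fun i : ℕ => f (p + i)) k
  obtain ⟨i, hi, hle⟩ := Finset.exists_le_of_sum_le (nonempty_range_iff.2 hk.ne')
    (f := fun _ => (f (p + k) - f p) / k) (g := fun i : ℕ => f (p + i + 1) - f (p + i))
    (by rw [sum_const, card_range, htel, nsmul_eq_mul, mul_div_cancel₀ _ (by positivity)])
  exact ⟨i, mem_range.1 hi, hle⟩

theorem exists_le_sub_div_of_le_sub (f : ℤ → ℝ) {p q : ℤ} {c L ε : ℝ} (hpq : p < q)
    (hL : (q : ℝ) - p ≤ L) (hε : 0 < ε) (hc : 0 ≤ c) (h : c ≤ f q - f p) :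
    ∃ ℓ ∈ Ico p q, c / (L * ε) ≤ (f (ℓ + 1) - f ℓ) / ε := by
  obtain ⟨k, rfl⟩ : ∃ k : ℕ, q = p + k := ⟨(q - p).toNat, by omega⟩
  have hk : 0 < k := by omega
  obtain ⟨i, hi, hmv⟩ := exists_div_le_sub f p hk
  push_cast at hL
  refine ⟨p + i, mem_Ico.2 ⟨by omega, by omega⟩, ?_⟩
  calc c / (L * ε) = c / L / ε := by rw [div_div]
    _ ≤ (f (p + k) - f p) / k / ε :=
      div_le_div_of_nonneg_right (div_le_div₀ (hc.trans h) h (by positivity) (by simpa using hL))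
        hε.le
    _ ≤ (f (p + i + 1) - f (p + i)) / ε := by gcongr

section DiscreteDerivatives

variable {N : ℕ} {u : ℤ → ℝ}

theorem eps_nonneg (N : ℕ) : 0 ≤ eps N := by unfold eps; positivity

theorem eps_pos (hN : 0 < N) : 0 < eps N := by unfold eps; positivity

theorem D_add_one (N : ℕ) (u : ℤ → ℝ) (ℓ : ℤ) : D N u (ℓ + 1) = (u (ℓ + 1) - u ℓ) / eps N := by
  rw [D, add_sub_cancel_right]

theorem D3_add_one (N : ℕ) (u : ℤ → ℝ) (ℓ : ℤ) :
    D3 N u (ℓ + 1) = (D2 N u (ℓ + 1) - D2 N u ℓ) / eps N := by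
  rw [D3, add_sub_cancel_right]

theorem D_nonpos_of_le {ℓ : ℤ} (h : u ℓ ≤ u (ℓ - 1)) : D N u ℓ ≤ 0 :=
  div_nonpos_of_nonpos_of_nonneg (sub_nonpos.2 h) (eps_nonneg N)

theorem D2_nonpos_of_le_of_le {ℓ : ℤ} (h₁ : u (ℓ + 1) ≤ u ℓ) (h₂ : u (ℓ - 1) ≤ u ℓ) :
    D2 N u ℓ ≤ 0 := by
  have hright : D N u (ℓ + 1) ≤ 0 := D_nonpos_of_le (by rwa [add_sub_cancel_right])
  have hleft : 0 ≤ D N u ℓ := div_nonneg (sub_nonneg.2 h₂) (eps_nonneg N)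
  exact div_nonpos_of_nonpos_of_nonneg (by linarith) (eps_nonneg N)

end DiscreteDerivatives

section Periodicity

variable {N : ℕ} {u : ℤ → ℝ}

theorem Per.periodic (hu : Per N u) : Periodic u (2 * N) := hu

theorem Per.D (hu : Per N u) : Per N (D N u) := fun ℓ => by
  simp only [_root_.D, hu ℓ, add_sub_right_comm, hu (ℓ - 1)]

theorem Per.D2 (hu : Per N u) : Per N (D2 N u) := fun ℓ => by
  simp only [_root_.D2, hu.D ℓ, add_right_comm, hu.D (ℓ + 1)]

theorem Per.D3 (hu : Per N u) : Per N (D3 N u) := fun ℓ => by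
  simp only [_root_.D3, hu.D2 ℓ, add_sub_right_comm, hu.D2 (ℓ - 1)]

theorem period_pos (hN : 0 < N) : (0 : ℤ) < 2 * N := by positivity

theorem pos_of_cell_nonempty (h : (cell N).Nonempty) : 0 < N := by
  obtain ⟨ℓ, hℓ⟩ := h
  rw [cell, mem_Icc] at hℓ
  omega

theorem toIocMod_mem_cell (hN : 0 < N) (ℓ : ℤ) : toIocMod (period_pos hN) (-N) ℓ ∈ cell N := by
  have h := toIocMod_mem_Ioc (period_pos hN) (-N) ℓ
  rw [Set.mem_Ioc] at h
  rw [cell, mem_Icc]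
  omega

theorem Per.abs_le_sup' (hu : Per N u) (hne : (cell N).Nonempty) (ℓ : ℤ) :
    |u ℓ| ≤ (cell N).sup' hne (fun m => |u m|) := by
  have hN := pos_of_cell_nonempty hne
  rw [← hu.periodic.apply_toIocMod (period_pos hN) (-N) ℓ]
  exact le_sup' (fun m => |u m|) (toIocMod_mem_cell hN ℓ)

end Periodicity

section Transition

variable {N : ℕ} {β : ℤ → ℝ}

theorem exists_zero_one_run (hN : 0 < N) (hper : Per N β)
    (hrange : ∀ ℓ : ℤ, β ℓ ∈ Set.Icc (0 : ℝ) 1) (h0 : ∃ ℓ : ℤ, β ℓ = 0) (h1 : ∃ ℓ : ℤ, β ℓ = 1) :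
    ∃ a b : ℤ, a < b ∧ b - a < 2 * N ∧ β a = 0 ∧ β b = 1 ∧
      ∀ m, a < m → m < b → β m ∈ Set.Ioo (0 : ℝ) 1 := by
  obtain ⟨ℓ₀, hℓ₀⟩ := h0
  obtain ⟨ℓ₁, hℓ₁⟩ := h1
  have hp := period_pos hN
  have hr₀ : 0 ≤ (ℓ₁ - ℓ₀) % (2 * N) := Int.emod_nonneg _ hp.ne'
  have hr : (ℓ₁ - ℓ₀) % (2 * N) < 2 * N := Int.emod_lt_of_pos _ hp
  have hβr : β (ℓ₀ + ((ℓ₁ - ℓ₀) % (2 * N)).toNat) = 1 := by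
    rw [← hper.periodic.sub_int_mul_eq ((ℓ₁ - ℓ₀) / (2 * N)), Int.cast_id] at hℓ₁
    rw [Int.toNat_of_nonneg hr₀, Int.emod_def, ← hℓ₁]
    ring_nf
  -- a zero and a one at minimal distance have only values in (0,1) between them
  have hP : ∃ d : ℕ, ∃ a, β a = 0 ∧ β (a + d) = 1 := ⟨_, ℓ₀, hℓ₀, hβr⟩
  obtain ⟨a, ha, hb⟩ := Nat.find_spec hP
  have hd : 0 < Nat.find hP := Nat.pos_of_ne_zero fun h => by simp [h, ha] at hb
  have hdN : Nat.find hP ≤ ((ℓ₁ - ℓ₀) % (2 * N)).toNat := Nat.find_min' hP ⟨ℓ₀, hℓ₀, hβr⟩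
  refine ⟨a, a + Nat.find hP, by omega, by omega, ha, hb, fun m ham hmb => ?_⟩
  obtain ⟨k, rfl⟩ : ∃ k : ℕ, m = a + k := ⟨(m - a).toNat, by omega⟩
  have hk : k < Nat.find hP := by omega
  refine ⟨(hrange _).1.lt_of_ne' fun h => Nat.find_min hP (m := Nat.find hP - k) (by omega)
    ⟨a + k, h, by rwa [add_assoc, ← Nat.cast_add, Nat.add_sub_cancel' hk.le]⟩,
    (hrange _).2.lt_of_ne fun h => Nat.find_min hP hk ⟨a, ha, h⟩⟩

end Transition

section Interface

variable {N : ℕ} {β : ℤ → ℝ}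

theorem le_card_interf (hN : 0 < N) (hper : Per N β) {a b : ℤ} (hab : a + 2 ≤ b)
    (hba : b - a < 2 * N) (hrun : ∀ m, a < m → m < b → β m ∈ Set.Ioo (0 : ℝ) 1) :
    b - a ≤ (interf N β).card := by
  have hp := period_pos hN
  -- `a + 1` is skipped: its neighbours `a` and `a + 2` may both have values in {0, 1}
  set T := (Icc a b).erase (a + 1)
  have hT : (T.card : ℤ) = b - a := by
    rw [card_erase_of_mem (mem_Icc.2 ⟨by omega, by omega⟩), Int.card_Icc]
    omega
  have hmaps : ∀ m ∈ T, toIocMod hp (-N) m ∈ interf N β := by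
    intro m hm
    rw [mem_erase, mem_Icc] at hm
    have hshift : ∀ j, β (toIocMod hp (-N) m + j) = β (m + j) := fun j =>
      (hper.periodic.add_const j).apply_toIocMod hp (-N) m
    refine mem_filter.2 ⟨toIocMod_mem_cell hN m, ?_⟩
    rcases hm.2.1.eq_or_lt with rfl | ham
    · exact ⟨1, by decide, by rw [hshift]; exact hrun _ (by omega) (by omega)⟩
    · exact ⟨-1, by decide, by rw [hshift]; exact hrun _ (by omega) (by omega)⟩
  have hinj : Set.InjOn (toIocMod hp (-N)) T := (toIocMod_injOn_Ioc hp (-N) (a - 1)).mono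
    fun m hm => by
      rw [mem_coe, mem_erase, mem_Icc] at hm
      exact ⟨by omega, by omega⟩
  exact hT ▸ Nat.cast_le.2 (card_le_card_of_injOn _ hmaps hinj)

theorem card_interf_eq_zero_or_ge (hN : 0 < N) (hper : Per N β) {a b : ℤ} (hab : a < b)
    (hba : b - a < 2 * N) (hrun : ∀ m, a < m → m < b → β m ∈ Set.Ioo (0 : ℝ) 1) :
    (interf N β).card = 0 ∨ b - a ≤ (interf N β).card := by
  rcases le_or_gt (a + 2) b with h | h
  · exact .inr (le_card_interf hN hper h hba hrun)
  · omega

end Interface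

theorem inv_pow_mul_le_of_eq_zero_or_le {K L ε : ℝ} (hL : 0 < L) (hε : 0 < ε)
    (hK : K = 0 ∨ L ≤ K) {j : ℕ} (hj : j ≠ 0) : ((K * ε) ^ j)⁻¹ ≤ ((L * ε) ^ j)⁻¹ := by
  rcases hK with rfl | hLK
  · rw [zero_mul, zero_pow hj, inv_zero]
    positivity
  · exact inv_anti₀ (by positivity) (by gcongr)

theorem exists_large_derivs {N : ℕ} {β : ℤ → ℝ} (hN : 0 < N)
    (hrange : ∀ ℓ : ℤ, β ℓ ∈ Set.Icc (0 : ℝ) 1) {a b : ℤ} (hab : a < b) (ha : β a = 0)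
    (hb : β b = 1) :
    (∃ x, (((b - a : ℝ) * eps N) ^ 1)⁻¹ ≤ |D N β x|) ∧
      (∃ y, (((b - a : ℝ) * eps N) ^ 2)⁻¹ ≤ |D2 N β y|) ∧
      (∃ z, (((b - a : ℝ) * eps N) ^ 3)⁻¹ ≤ |D3 N β z|) := by
  have hε := eps_pos hN
  have hba : (0 : ℝ) < b - a := sub_pos.2 (Int.cast_lt.2 hab)
  set h := (b - a : ℝ) * eps N
  have hstep : ∀ j : ℕ, (h ^ j)⁻¹ / h = (h ^ (j + 1))⁻¹ := fun j => by
    rw [pow_succ, mul_inv, div_eq_mul_inv]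
  have hpos : ∀ j : ℕ, 0 ≤ (h ^ j)⁻¹ := fun j => by positivity
  obtain ⟨x, hx, hDx⟩ := exists_le_sub_div_of_le_sub β hab le_rfl hε (hpos 0)
    (by rw [ha, hb]; norm_num)
  rw [hstep, zero_add, ← D_add_one] at hDx
  have hDa : D N β a ≤ 0 := D_nonpos_of_le (by rw [ha]; exact (hrange _).1)
  rw [mem_Ico] at hx
  obtain ⟨y, hy, hD2y⟩ := exists_le_sub_div_of_le_sub (D N β) (p := a) (q := x + 1)
    (L := b - a) (by omega) (by gcongr; exact_mod_cast hx.2) hε (hpos 1) (by linarith)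
  rw [hstep, ← D2] at hD2y
  have hD2b : D2 N β b ≤ 0 :=
    D2_nonpos_of_le_of_le (by rw [hb]; exact (hrange _).2) (by rw [hb]; exact (hrange _).2)
  rw [mem_Ico] at hy
  obtain ⟨z, -, hD3z⟩ := exists_le_sub_div_of_le_sub (fun ℓ => -D2 N β ℓ) (p := y) (q := b)
    (L := b - a) (by omega) (by gcongr; exact_mod_cast hy.1) hε (hpos 2) (by linarith)
  rw [hstep, neg_sub_neg, ← neg_sub, neg_div, ← D3_add_one] at hD3z
  exact ⟨⟨x + 1, hDx.trans (le_abs_self _)⟩, ⟨y, hD2y.trans (le_abs_self _)⟩,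
    ⟨z + 1, hD3z.trans (neg_le_abs _)⟩⟩

theorem stmt_8_general (N : ℕ) (β : ℤ → ℝ) (hβper : Per N β)
    (hrange : ∀ ℓ : ℤ, β ℓ ∈ Set.Icc (0 : ℝ) 1)
    (h0 : ∃ ℓ : ℤ, β ℓ = 0) (h1 : ∃ ℓ : ℤ, β ℓ = 1)
    (hne : (cell N).Nonempty) :
    ((interf N β).card * eps N)⁻¹ ≤ (cell N).sup' hne (fun ℓ => |D N β ℓ|) ∧
      ((((interf N β).card : ℝ) * eps N) ^ 2)⁻¹
        ≤ (cell N).sup' hne (fun ℓ => |D2 N β ℓ|) ∧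
      ((((interf N β).card : ℝ) * eps N) ^ 3)⁻¹
        ≤ (cell N).sup' hne (fun ℓ => |D3 N β ℓ|) := by
  have hN := pos_of_cell_nonempty hne
  obtain ⟨a, b, hab, hba, ha, hb, hrun⟩ := exists_zero_one_run hN hβper hrange h0 h1
  obtain ⟨⟨x, hx⟩, ⟨y, hy⟩, ⟨z, hz⟩⟩ := exists_large_derivs hN hrange hab ha hb
  have hK : ((interf N β).card : ℝ) = 0 ∨ (b - a : ℝ) ≤ (interf N β).card := by
    exact_mod_cast card_interf_eq_zero_or_ge hN hβper hab hba hrun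
  have hcompare (j : ℕ) (hj : j ≠ 0) :=
    inv_pow_mul_le_of_eq_zero_or_le (sub_pos.2 (Int.cast_lt.2 hab)) (eps_pos hN) hK hj
  refine ⟨?_, ?_, ?_⟩
  · simpa using (hcompare 1 one_ne_zero).trans (hx.trans (hβper.D.abs_le_sup' hne x))
  · exact (hcompare 2 two_ne_zero).trans (hy.trans (hβper.D2.abs_le_sup' hne y))
  · exact (hcompare 3 three_ne_zero).trans (hz.trans (hβper.D3.abs_le_sup' hne z))

/-- sharpness of the blending-function estimate: if a 2N-periodic
`β : ℤ → [0,1]` attains both the values 0 and 1, then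
`max_ℓ |(D^{(j)}β)_ℓ| ≥ (Kε)^{-j}` for `j = 1,2,3`, where `K = #I`. -/
theorem stmt_8 (N : ℕ) (hN : 1 ≤ N) (β : ℤ → ℝ) (hβper : Per N β)
    (hrange : ∀ ℓ : ℤ, β ℓ ∈ Set.Icc (0 : ℝ) 1)
    (h0 : ∃ ℓ : ℤ, β ℓ = 0) (h1 : ∃ ℓ : ℤ, β ℓ = 1)
    (hne : (cell N).Nonempty) :
    ((interf N β).card * eps N)⁻¹ ≤ (cell N).sup' hne (fun ℓ => |D N β ℓ|) ∧
      ((((interf N β).card : ℝ) * eps N) ^ 2)⁻¹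
        ≤ (cell N).sup' hne (fun ℓ => |D2 N β ℓ|) ∧
      ((((interf N β).card : ℝ) * eps N) ^ 3)⁻¹
        ≤ (cell N).sup' hne (fun ℓ => |D3 N β ℓ|) :=
  stmt_8_general N β hβper hrange h0 h1 hne
end
end

section
/- Let N ≥ 1 be an integer, ε := 1/N, and let Q₁, Q₂, Q₃ be symmetric real 2×2 matrices and M₁, M₂, M₃ symmetric real 2×2 matrices defining L^c. Let β : 𝕃 → [0,1] be Ω-periodic. Suppose there are γ_c ∈ ℝ and δ ≥ 0 such that ⟨L^c u, u⟩ ≥ γ_c ‖Du‖²_{ℓ²_ε} for all u ∈ U, and rᵀQ_j r ≤ δ|r|² for all r ∈ ℝ² and j = 1,2,3. Then for all u ∈ U: ⟨L̃ u, u⟩ ≥ (γ_c − 4δ) ‖Du‖²_{ℓ²_ε}. In particular, if δ < γ_c/4 then L̃ is positive definite. -/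
open Finset

noncomputable section

attribute [local instance] Classical.propDecidable

/-- lattice vectors (as elements of ℝ², realized as `Fin 2 → ℝ`):
`a₁ = ε(1,0)`, `a₂ = ε(1/2,√3/2)`, `a₃ = ε(−1/2,√3/2)`, `a₄ = −a₁`, `a₅ = −a₂`, `a₆ = −a₃`. -/
def avec (N : ℕ) : Fin 6 → (Fin 2 → ℝ) :=
  ![![eps N, 0],
    ![eps N / 2, eps N * Real.sqrt 3 / 2],
    ![-(eps N) / 2, eps N * Real.sqrt 3 / 2],
    ![-(eps N), 0],
    ![-(eps N) / 2, -(eps N * Real.sqrt 3) / 2],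
    ![eps N / 2, -(eps N * Real.sqrt 3) / 2]]

/-- lattice coordinates: a point `p = (i,j) ∈ ℤ²` represents `i a₁ + j a₂ ∈ 𝕃`. -/
def pt (N : ℕ) (p : ℤ × ℤ) : Fin 2 → ℝ :=
  (p.1 : ℝ) • avec N 0 + (p.2 : ℝ) • avec N 1

/-- index offsets corresponding to the directions `a₁,…,a₆`. -/
def oa : Fin 6 → ℤ × ℤ := ![(1, 0), (0, 1), (-1, 1), (-1, 0), (0, -1), (1, -1)]

/-- index offsets corresponding to the second-neighbour directions
`b₁ = a₁+a₂`, `b₂ = a₂+a₃`, `b₃ = a₃+a₄ = a₃−a₁`. -/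
def ob : Fin 3 → ℤ × ℤ := ![(1, 1), (-1, 2), (-2, 1)]

/-- the periodic index cell: both lattice coordinates in `{−N+1,…,N}`. -/
def cell2 (N : ℕ) : Finset (ℤ × ℤ) :=
  Finset.Icc (-(N : ℤ) + 1) N ×ˢ Finset.Icc (-(N : ℤ) + 1) N

/-- Ω-periodicity of a lattice function (in lattice coordinates). -/
def Per2 {α : Type*} (N : ℕ) (v : ℤ × ℤ → α) : Prop :=
  ∀ p : ℤ × ℤ, v (p.1 + 2 * N, p.2) = v p ∧ v (p.1, p.2 + 2 * N) = v p

/-- zero mean over the periodic cell. -/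
def MeanZero2 (N : ℕ) (u : ℤ × ℤ → Fin 2 → ℝ) : Prop :=
  ∑ p ∈ cell2 N, u p = 0

/-- finite-difference operator `D_r v(x) := (v(x+r) − v(x))/ε` in lattice coordinates;
`D_r D_s v = Dd r (Dd s v)`. -/
def Dd {α : Type*} [AddCommGroup α] [Module ℝ α] (N : ℕ) (d : ℤ × ℤ)
    (v : ℤ × ℤ → α) (p : ℤ × ℤ) : α :=
  (eps N)⁻¹ • (v (p + d) - v p)

/-- Euclidean inner product on ℝ². -/
def vdot (r s : Fin 2 → ℝ) : ℝ := r 0 * s 0 + r 1 * s 1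

/-- squared Euclidean norm on ℝ². -/
def vnormsq (r : Fin 2 → ℝ) : ℝ := vdot r r

/-- the matrix inner product `⟨r,s⟩_M := rᵀ M s`. -/
def mdot (M : Matrix (Fin 2) (Fin 2) ℝ) (r s : Fin 2 → ℝ) : ℝ := vdot r (M.mulVec s)

/-- the ℓ²_ε inner product `⟨u,w⟩ := ε² Σ_{x∈𝓛} u(x)·w(x)`. -/
def ip2 (N : ℕ) (u w : ℤ × ℤ → Fin 2 → ℝ) : ℝ :=
  eps N ^ 2 * ∑ p ∈ cell2 N, vdot (u p) (w p)

/-- `‖Du‖²_{ℓ²_ε} := ε² Σ_{x∈𝓛} Σ_{i=1}^{3} |D_{a_i}u(x)|²`. -/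
def gradnsq (N : ℕ) (u : ℤ × ℤ → Fin 2 → ℝ) : ℝ :=
  eps N ^ 2 * ∑ p ∈ cell2 N,
    (vnormsq (Dd N (oa 0) u p) + vnormsq (Dd N (oa 1) u p) + vnormsq (Dd N (oa 2) u p))

/-- the closed regular hexagon of "radius" r centered at the origin with sides
parallel to the lattice directions: convex hull of the six vertices
`r(cos(π/6 + kπ/3), sin(π/6 + kπ/3))`. -/
def Hex (r : ℝ) : Set (Fin 2 → ℝ) :=
  convexHull ℝ
    {v | ∃ k : Fin 6, v = r • ![Real.cos (Real.pi / 6 + (k : ℕ) * Real.pi / 3),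
                                Real.sin (Real.pi / 6 + (k : ℕ) * Real.pi / 3)]}

/-- the blending annulus `Ω_b := Hex(εR_b) \ Hex(εR_a)`. -/
def OmegaB (N : ℕ) (Ra Rb : ℕ) : Set (Fin 2 → ℝ) :=
  Hex (eps N * Rb) \ Hex (eps N * Ra)

/-- operator norm of a 2×2 matrix (as map on Euclidean ℝ²). -/
def opNorm (M : Matrix (Fin 2) (Fin 2) ℝ) : ℝ :=
  ‖Matrix.toEuclideanCLM (𝕜 := ℝ) M‖

/-- `‖Dβ‖_{ℓ∞} := max_i sup_x |D_{a_i}β(x)|`. -/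
def DbSup (N : ℕ) (β : ℤ × ℤ → ℝ) : ℝ :=
  ⨆ (i : Fin 6) (p : ℤ × ℤ), |Dd N (oa i) β p|

/-- `‖D²β‖_{ℓ∞}` over all pairs of directions from `{a₁,…,a₆}`. -/
def D2bSup (N : ℕ) (β : ℤ × ℤ → ℝ) : ℝ :=
  ⨆ (i : Fin 6) (j : Fin 6) (p : ℤ × ℤ), |Dd N (oa i) (Dd N (oa j) β) p|

/-- `‖D³β‖_{ℓ∞}` over all triples of directions from `{a₁,…,a₆}`. -/
def D3bSup (N : ℕ) (β : ℤ × ℤ → ℝ) : ℝ :=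
  ⨆ (i : Fin 6) (j : Fin 6) (k : Fin 6) (p : ℤ × ℤ),
    |Dd N (oa i) (Dd N (oa j) (Dd N (oa k) β)) p|

/-- the Poincaré constant `C_P^{a,b} := ((εK)(εR_b)|log(εR_b)|)^{1/2}`. -/
def CP (N : ℕ) (Ra Rb : ℕ) : ℝ :=
  Real.sqrt ((eps N * ((Rb : ℝ) - Ra)) * (eps N * Rb) * |Real.log (eps N * Rb)|)

/-- for `j = 1,2,3`, the offset of the direction `a_j`. -/
def oaJ (j : Fin 3) : ℤ × ℤ := oa (Fin.castLE (by norm_num) j)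

/-- for `j = 1,2,3`, the offset of the direction `a_{j+1}`. -/
def oaJ1 (j : Fin 3) : ℤ × ℤ := oa (Fin.castLE (by norm_num) j.succ)

/-- linearized atomistic operator
`(L^a v)(x) := −Σ_i M_i D_{a_i}D_{a_i}v(x−a_i) − Σ_j Q_j D_{b_j}D_{b_j}v(x−b_j)`. -/
def La2 (N : ℕ) (M Q : Fin 3 → Matrix (Fin 2) (Fin 2) ℝ)
    (v : ℤ × ℤ → Fin 2 → ℝ) (p : ℤ × ℤ) : Fin 2 → ℝ :=
  (-∑ i : Fin 3, (M i).mulVec (Dd N (oaJ i) (Dd N (oaJ i) v) (p - oaJ i)))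
    - ∑ j : Fin 3, (Q j).mulVec (Dd N (ob j) (Dd N (ob j) v) (p - ob j))

/-- linearized local continuum (QCL) operator: same nearest-neighbour part, and
each second-neighbour term replaced by its Cauchy–Born expansion. -/
def Lc2 (N : ℕ) (M Q : Fin 3 → Matrix (Fin 2) (Fin 2) ℝ)
    (v : ℤ × ℤ → Fin 2 → ℝ) (p : ℤ × ℤ) : Fin 2 → ℝ :=
  (-∑ i : Fin 3, (M i).mulVec (Dd N (oaJ i) (Dd N (oaJ i) v) (p - oaJ i)))
    - ∑ j : Fin 3, (Q j).mulVec
        (Dd N (oaJ j) (Dd N (oaJ j) v) (p - oaJ j)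
          + Dd N (oaJ1 j) (Dd N (oaJ1 j) v) (p - oaJ1 j)
          + Dd N (oaJ j) (Dd N (oaJ1 j) v) (p - oaJ j)
          + Dd N (oaJ j) (Dd N (oaJ1 j) v) (p - oaJ1 j))

/-- the B-QCF operator `(L^{bqcf}v)(x) := β(x)(L^a v)(x) + (1−β(x))(L^c v)(x)`. -/
def Lbqcf2 (N : ℕ) (M Q : Fin 3 → Matrix (Fin 2) (Fin 2) ℝ) (β : ℤ × ℤ → ℝ)
    (v : ℤ × ℤ → Fin 2 → ℝ) (p : ℤ × ℤ) : Fin 2 → ℝ :=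
  β p • La2 N M Q v p + (1 - β p) • Lc2 N M Q v p

/-- the quadratic form of the auxiliary operator `L̃`:
`⟨L̃u,u⟩ := ⟨L^c u,u⟩ − ε⁴ Σ_j Σ_x β(x−a_{j+1}) |D_{a_j}D_{a_{j+1}}u(x−a_j−a_{j+1})|²_{Q_j}`. -/
def LtildeForm (N : ℕ) (M Q : Fin 3 → Matrix (Fin 2) (Fin 2) ℝ) (β : ℤ × ℤ → ℝ)
    (u : ℤ × ℤ → Fin 2 → ℝ) : ℝ :=
  ip2 N (Lc2 N M Q u) u
    - eps N ^ 4 * ∑ j : Fin 3, ∑ p ∈ cell2 N,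
        β (p - oaJ1 j)
          * mdot (Q j) (Dd N (oaJ j) (Dd N (oaJ1 j) u) (p - oaJ j - oaJ1 j))
              (Dd N (oaJ j) (Dd N (oaJ1 j) u) (p - oaJ j - oaJ1 j))

/-- `C'' := max_{j=1,2,3} |Q_j|` (operator norms). -/
def Cqq (Q : Fin 3 → Matrix (Fin 2) (Fin 2) ℝ) : ℝ :=
  max (max (opNorm (Q 0)) (opNorm (Q 1))) (opNorm (Q 2))

/-!
The correction term subtracted from `⟨L^c u, u⟩` is a weighted sum of `|D_{a_j}D_{a_{j+1}}u|²_{Q_j}`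
with weights `β ∈ [0,1]`, so it is at most `δ` times the unweighted sum of
`|D_{a_j}D_{a_{j+1}}u|²`. Since `|D_a w|² ≤ 2ε⁻²(|w(· + a)|² + |w|²)` and lattice sums of periodic
functions are translation invariant, each second difference costs at most `4ε⁻²` times
`‖D_{a_{j+1}}u‖²`. The directions `a₂, a₃, a₄` give, up to the sign of `a₄ = −a₁`, exactly the three
directions of `‖Du‖²`, hence the correction is at most `4δ‖Du‖²`, and coercivity of `L^c` concludes.
-/

section PeriodicSums

variable {M : Type*} [AddCommMonoid M] {N : ℕ}

lemma Function.Periodic.sum_Ico_add_one_eq {g : ℤ → M} {n : ℕ} (hg : Function.Periodic g n)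
    (a : ℤ) : ∑ i ∈ Ico (a + 1) (a + 1 + n), g i = ∑ i ∈ Ico a (a + n), g i := by
  rcases Nat.eq_zero_or_pos n with rfl | hn
  · simp
  have h₁ : Ico a (a + n) = insert a (Ico (a + 1) (a + n)) := by ext; simp; omega
  have h₂ : Ico (a + 1) (a + 1 + n) = insert (a + n) (Ico (a + 1) (a + n)) := by ext; simp; omega
  rw [h₁, h₂, sum_insert (by simp), sum_insert (by simp), hg a]

lemma Function.Periodic.sum_Ico_comp_add {g : ℤ → M} {n : ℕ} (hg : Function.Periodic g n)
    (a c : ℤ) : ∑ i ∈ Ico a (a + n), g (i + c) = ∑ i ∈ Ico a (a + n), g i := by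
  have key : ∀ k : ℤ, ∑ i ∈ Ico (a + k) (a + k + n), g i = ∑ i ∈ Ico a (a + n), g i := by
    intro k
    induction k using Int.induction_on with
    | zero => simp
    | succ k ih => rw [← add_assoc, hg.sum_Ico_add_one_eq, ih]
    | pred k ih =>
      rw [← ih, ← hg.sum_Ico_add_one_eq]
      ring_nf
  rw [sum_Ico_add', ← key c]
  ring_nf

lemma Icc_neg_add_one_eq_Ico (N : ℕ) :
    Icc (-(N : ℤ) + 1) N = Ico (-(N : ℤ) + 1) (-(N : ℤ) + 1 + ↑(2 * N)) := by
  ext; simp; omega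

lemma Per2.periodic_fst {α : Type*} {f : ℤ × ℤ → α} (hf : Per2 N f) (j : ℤ) :
    Function.Periodic (fun i => f (i, j)) ↑(2 * N) := fun i => by
  simpa using (hf (i, j)).1

lemma Per2.periodic_snd {α : Type*} {f : ℤ × ℤ → α} (hf : Per2 N f) (i : ℤ) :
    Function.Periodic (fun j => f (i, j)) ↑(2 * N) := fun j => by
  simpa using (hf (i, j)).2

lemma Per2.sum_cell2_comp_add {f : ℤ × ℤ → M} (hf : Per2 N f) (c : ℤ × ℤ) :
    ∑ p ∈ cell2 N, f (p + c) = ∑ p ∈ cell2 N, f p := by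
  have hrow : Function.Periodic (fun i => ∑ j ∈ Icc (-(N : ℤ) + 1) N, f (i, j)) ↑(2 * N) :=
    fun i => sum_congr rfl fun j _ => hf.periodic_fst j i
  simp only [cell2, sum_product, Icc_neg_add_one_eq_Ico] at hrow ⊢
  rw [← hrow.sum_Ico_comp_add _ c.1]
  exact sum_congr rfl fun i _ => (hf.periodic_snd (i + c.1)).sum_Ico_comp_add _ c.2

lemma Per2.sum_cell2_comp_sub {f : ℤ × ℤ → M} (hf : Per2 N f) (c : ℤ × ℤ) :
    ∑ p ∈ cell2 N, f (p - c) = ∑ p ∈ cell2 N, f p := by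
  simpa only [sub_eq_add_neg] using hf.sum_cell2_comp_add (-c)

lemma Per2.comp {α γ : Type*} {v : ℤ × ℤ → α} (hv : Per2 N v) (g : α → γ) :
    Per2 N (g ∘ v) := fun p => ⟨congrArg g (hv p).1, congrArg g (hv p).2⟩

lemma Per2.dd {α : Type*} [AddCommGroup α] [Module ℝ α] {v : ℤ × ℤ → α} (hv : Per2 N v)
    (d : ℤ × ℤ) : Per2 N (Dd N d v) := by
  intro p
  have h₁ : ((p.1 + 2 * N, p.2) : ℤ × ℤ) + d = ((p + d).1 + 2 * N, (p + d).2) := by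
    ext <;> simp [add_right_comm]
  have h₂ : ((p.1, p.2 + 2 * N) : ℤ × ℤ) + d = ((p + d).1, (p + d).2 + 2 * N) := by
    ext <;> simp [add_right_comm]
  exact ⟨by simp only [Dd, h₁, (hv _).1], by simp only [Dd, h₂, (hv _).2]⟩

end PeriodicSums

lemma vnormsq_nonneg (r : Fin 2 → ℝ) : 0 ≤ vnormsq r :=
  add_nonneg (mul_self_nonneg _) (mul_self_nonneg _)

lemma vnormsq_smul (c : ℝ) (r : Fin 2 → ℝ) : vnormsq (c • r) = c ^ 2 * vnormsq r := by
  simp only [vnormsq, vdot, Pi.smul_apply, smul_eq_mul]; ring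

lemma vnormsq_neg (r : Fin 2 → ℝ) : vnormsq (-r) = vnormsq r := by
  simpa using vnormsq_smul (-1) r

lemma vnormsq_sub_le (r s : Fin 2 → ℝ) : vnormsq (r - s) ≤ 2 * vnormsq r + 2 * vnormsq s := by
  simp only [vnormsq, vdot, Pi.sub_apply]
  nlinarith [sq_nonneg (r 0 + s 0), sq_nonneg (r 1 + s 1)]

lemma sum_weighted_mdot_le {ι : Type*} (s : Finset ι) (b : ι → ℝ) (X : ι → Fin 2 → ℝ)
    {Q : Matrix (Fin 2) (Fin 2) ℝ} {δ : ℝ} (hδ : 0 ≤ δ) (hQ : ∀ r, mdot Q r r ≤ δ * vnormsq r)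
    (hb : ∀ i ∈ s, b i ∈ Set.Icc (0 : ℝ) 1) :
    ∑ i ∈ s, b i * mdot Q (X i) (X i) ≤ δ * ∑ i ∈ s, vnormsq (X i) := by
  rw [mul_sum]
  refine sum_le_sum fun i hi => ?_
  obtain ⟨hb₀, hb₁⟩ := hb i hi
  have hX : 0 ≤ δ * vnormsq (X i) := mul_nonneg hδ (vnormsq_nonneg _)
  calc b i * mdot Q (X i) (X i) ≤ b i * (δ * vnormsq (X i)) :=
        mul_le_mul_of_nonneg_left (hQ _) hb₀
    _ ≤ δ * vnormsq (X i) := mul_le_of_le_one_left hX hb₁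

variable {N : ℕ}

lemma vnormsq_Dd_le (d : ℤ × ℤ) (w : ℤ × ℤ → Fin 2 → ℝ) (p : ℤ × ℤ) :
    vnormsq (Dd N d w p) ≤ (eps N)⁻¹ ^ 2 * (2 * vnormsq (w (p + d)) + 2 * vnormsq (w p)) := by
  rw [Dd, vnormsq_smul]
  exact mul_le_mul_of_nonneg_left (vnormsq_sub_le _ _) (sq_nonneg _)

lemma sum_vnormsq_Dd_le {w : ℤ × ℤ → Fin 2 → ℝ} (hw : Per2 N w) (d : ℤ × ℤ) :
    ∑ p ∈ cell2 N, vnormsq (Dd N d w p) ≤ 4 * (eps N)⁻¹ ^ 2 * ∑ p ∈ cell2 N, vnormsq (w p) := by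
  have hshift := (hw.comp vnormsq).sum_cell2_comp_add d
  calc ∑ p ∈ cell2 N, vnormsq (Dd N d w p)
      ≤ ∑ p ∈ cell2 N, (eps N)⁻¹ ^ 2 * (2 * vnormsq (w (p + d)) + 2 * vnormsq (w p)) :=
        sum_le_sum fun p _ => vnormsq_Dd_le d w p
    _ = 4 * (eps N)⁻¹ ^ 2 * ∑ p ∈ cell2 N, vnormsq (w p) := by
        simp only [← mul_sum, sum_add_distrib, Function.comp_apply] at hshift ⊢
        rw [hshift]; ring

lemma Dd_neg (d : ℤ × ℤ) (w : ℤ × ℤ → Fin 2 → ℝ) (p : ℤ × ℤ) :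
    Dd N (-d) w p = -Dd N d w (p - d) := by
  rw [Dd, Dd, sub_add_cancel, ← smul_neg, neg_sub, sub_eq_add_neg p d]

lemma sum_vnormsq_Dd_neg {w : ℤ × ℤ → Fin 2 → ℝ} (hw : Per2 N w) (d : ℤ × ℤ) :
    ∑ p ∈ cell2 N, vnormsq (Dd N (-d) w p) = ∑ p ∈ cell2 N, vnormsq (Dd N d w p) := by
  simp only [Dd_neg, vnormsq_neg]
  exact ((hw.dd d).comp vnormsq).sum_cell2_comp_sub d

lemma sq_eps_mul_sum_vnormsq_Dd_oaJ1 {u : ℤ × ℤ → Fin 2 → ℝ} (hu : Per2 N u) :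
    eps N ^ 2 * ∑ j : Fin 3, ∑ p ∈ cell2 N, vnormsq (Dd N (oaJ1 j) u p) = gradnsq N u := by
  have ha₄ : oaJ1 2 = -oa 0 := rfl
  rw [Fin.sum_univ_three, ha₄, sum_vnormsq_Dd_neg hu, gradnsq, sum_add_distrib, sum_add_distrib]
  rw [show oaJ1 0 = oa 1 from rfl, show oaJ1 1 = oa 2 from rfl]
  ring

lemma sum_weighted_mixed_Dd_le {u : ℤ × ℤ → Fin 2 → ℝ} (hu : Per2 N u) (β : ℤ × ℤ → ℝ)
    (hβ : ∀ p, β p ∈ Set.Icc (0 : ℝ) 1) {Q : Matrix (Fin 2) (Fin 2) ℝ} {δ : ℝ} (hδ : 0 ≤ δ)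
    (hQ : ∀ r, mdot Q r r ≤ δ * vnormsq r) (d e : ℤ × ℤ) :
    ∑ p ∈ cell2 N, β (p - e) * mdot Q (Dd N d (Dd N e u) (p - d - e)) (Dd N d (Dd N e u) (p - d - e))
      ≤ 4 * (eps N)⁻¹ ^ 2 * δ * ∑ p ∈ cell2 N, vnormsq (Dd N e u p) := by
  have hshift := (((hu.dd e).dd d).comp vnormsq).sum_cell2_comp_sub (d + e)
  simp only [Function.comp_apply, ← sub_sub] at hshift
  calc _ ≤ δ * ∑ p ∈ cell2 N, vnormsq (Dd N d (Dd N e u) (p - d - e)) :=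
        sum_weighted_mdot_le _ _ _ hδ hQ fun p _ => hβ _
    _ = δ * ∑ p ∈ cell2 N, vnormsq (Dd N d (Dd N e u) p) := by rw [hshift]
    _ ≤ δ * (4 * (eps N)⁻¹ ^ 2 * ∑ p ∈ cell2 N, vnormsq (Dd N e u p)) :=
        mul_le_mul_of_nonneg_left (sum_vnormsq_Dd_le (hu.dd e) d) hδ
    _ = _ := by ring

lemma LtildeForm_correction_le {u : ℤ × ℤ → Fin 2 → ℝ} (hu : Per2 N u)
    {Q : Fin 3 → Matrix (Fin 2) (Fin 2) ℝ} (β : ℤ × ℤ → ℝ) (hβ : ∀ p, β p ∈ Set.Icc (0 : ℝ) 1)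
    {δ : ℝ} (hδ : 0 ≤ δ) (hQ : ∀ j r, mdot (Q j) r r ≤ δ * vnormsq r) :
    eps N ^ 4 * ∑ j : Fin 3, ∑ p ∈ cell2 N,
        β (p - oaJ1 j)
          * mdot (Q j) (Dd N (oaJ j) (Dd N (oaJ1 j) u) (p - oaJ j - oaJ1 j))
              (Dd N (oaJ j) (Dd N (oaJ1 j) u) (p - oaJ j - oaJ1 j))
      ≤ 4 * δ * gradnsq N u := by
  have hsum := sum_le_sum fun j (_ : j ∈ univ) =>
    sum_weighted_mixed_Dd_le hu β hβ hδ (hQ j) (oaJ j) (oaJ1 j)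
  -- `ε⁴ ε⁻² = ε²` holds also for the junk value `ε = 0`
  have heps : eps N ^ 4 * (4 * (eps N)⁻¹ ^ 2 * δ) = 4 * δ * eps N ^ 2 := by
    calc _ = 4 * δ * (eps N * eps N * (eps N)⁻¹) ^ 2 := by ring
      _ = _ := by rw [mul_self_mul_inv]
  calc _ ≤ eps N ^ 4 * ∑ j : Fin 3, 4 * (eps N)⁻¹ ^ 2 * δ * ∑ p ∈ cell2 N, vnormsq (Dd N (oaJ1 j) u p) :=
        mul_le_mul_of_nonneg_left hsum (by positivity)
    _ = 4 * δ * gradnsq N u := by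
        rw [← mul_sum, ← mul_assoc, heps, mul_assoc, sq_eps_mul_sum_vnormsq_Dd_oaJ1 hu]

theorem stmt_17_general (N : ℕ)
    (M Q : Fin 3 → Matrix (Fin 2) (Fin 2) ℝ)
    (β : ℤ × ℤ → ℝ)
    (hβrange : ∀ p : ℤ × ℤ, β p ∈ Set.Icc (0 : ℝ) 1)
    (γc δ : ℝ) (hδ : 0 ≤ δ)
    (hc : ∀ u : ℤ × ℤ → Fin 2 → ℝ, Per2 N u → MeanZero2 N u →
      ip2 N (Lc2 N M Q u) u ≥ γc * gradnsq N u)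
    (hQ : ∀ j : Fin 3, ∀ r : Fin 2 → ℝ, mdot (Q j) r r ≤ δ * vnormsq r) :
    ∀ u : ℤ × ℤ → Fin 2 → ℝ, Per2 N u → MeanZero2 N u →
      LtildeForm N M Q β u ≥ (γc - 4 * δ) * gradnsq N u := by
  intro u hu hmu
  have hcorr := LtildeForm_correction_le hu β hβrange hδ hQ
  have hcoer := hc u hu hmu
  rw [LtildeForm]
  linarith

/-- stability of the auxiliary operator `L̃`: if `L^c` is coercive
with constant `γ_c` and `rᵀQ_j r ≤ δ|r|²`, then `⟨L̃u,u⟩ ≥ (γ_c − 4δ)‖Du‖²`. -/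
theorem stmt_17 (N : ℕ) (hN : 1 ≤ N)
    (M Q : Fin 3 → Matrix (Fin 2) (Fin 2) ℝ)
    (hMsym : ∀ i, (M i).IsSymm) (hQsym : ∀ j, (Q j).IsSymm)
    (β : ℤ × ℤ → ℝ) (hβper : Per2 N β)
    (hβrange : ∀ p : ℤ × ℤ, β p ∈ Set.Icc (0 : ℝ) 1)
    (γc δ : ℝ) (hδ : 0 ≤ δ)
    (hc : ∀ u : ℤ × ℤ → Fin 2 → ℝ, Per2 N u → MeanZero2 N u →
      ip2 N (Lc2 N M Q u) u ≥ γc * gradnsq N u)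
    (hQ : ∀ j : Fin 3, ∀ r : Fin 2 → ℝ, mdot (Q j) r r ≤ δ * vnormsq r) :
    ∀ u : ℤ × ℤ → Fin 2 → ℝ, Per2 N u → MeanZero2 N u →
      LtildeForm N M Q β u ≥ (γc - 4 * δ) * gradnsq N u :=
  stmt_17_general N M Q β hβrange γc δ hδ hc hQ
end
end
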